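/- For every n ≥ 3, all configurations of the n²-puzzle are connected via legal moves: any bijection of n² labeled robots onto the vertices of the n×n grid graph can be transformed to any other by a sequence of synchronous rotations along vertex-disjoint cycles. -/

import Mathlib

/-- The `n × n` grid graph: vertices `Fin n × Fin n`, edges between vertices at
`L₁`-distance `1`. -/
def gridGraph (n : ℕ) : SimpleGraph (Fin n × Fin n) :=
  SimpleGraph.fromRel fun a b => Nat.dist a.1.1 b.1.1 + Nat.dist a.2.1 b.2.1 = 1

/-- A legal single-step move of the fully occupied graph `G`: a permutation `σ` of the
vertices such that every robot stays put or moves along an edge, and no two robots swap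
along an edge (no head-on collision).  Equivalently (since `σ` is a bijection), `σ`
synchronously rotates the robots along a collection of vertex-disjoint cycles of `G`
(of length at least 3) and fixes all other robots. -/
def LegalMove {V : Type*} (G : SimpleGraph V) (σ : Equiv.Perm V) : Prop :=
  (∀ v, σ v = v ∨ G.Adj v (σ v)) ∧ ∀ v, σ v ≠ v → σ (σ v) ≠ v

/-- One legal move between configurations (bijections from robots to vertices). -/
def Step {R V : Type*} (G : SimpleGraph V) (c c' : R ≃ V) : Prop :=
  ∃ σ : Equiv.Perm V, LegalMove G σ ∧ c' = c.trans σ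

/-!
The moves generate a subgroup of the permutations of the vertices, and a configuration `c'`
is reachable from `c` as soon as `c⁻¹ c'` lies in it, because legal moves are closed under
inversion. In the `3 × 3` grid, explicit words in the four rotations of unit squares give
every horizontal transposition of neighbours. Every edge of the `n × n` grid lies in a
translated (and possibly transposed) copy of the `3 × 3` grid, so every transposition along
an edge is generated; since the grid is connected, these transpositions generate all
permutations.
-/

open Equiv SimpleGraph

section LegalMoves

variable {V : Type*} {G : SimpleGraph V}

theorem LegalMove.inv {σ : Perm V} (hσ : LegalMove G σ) : LegalMove G σ⁻¹ := by
  refine ⟨fun v => ?_, fun v hv hvv => ?_⟩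
  · rcases hσ.1 (σ⁻¹ v) with h | h
    · exact Or.inl (by simpa using h.symm)
    · exact Or.inr (by simpa using h.symm)
  · have h : σ v = σ⁻¹ v := by simpa using congrArg σ hvv.symm
    exact hσ.2 v (by rwa [h]) (by simp [h])

theorem Step.symm {R : Type*} {c c' : R ≃ V} (h : Step G c c') : Step G c' c := by
  obtain ⟨σ, hσ, rfl⟩ := h
  exact ⟨σ⁻¹, hσ.inv, by ext; simp⟩

instance [Fintype V] [DecidableEq V] [DecidableRel G.Adj] (σ : Perm V) :
    Decidable (LegalMove G σ) :=
  inferInstanceAs (Decidable (_ ∧ _))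

variable (G) in
def legalMoveGroup : Subgroup (Perm V) :=
  Subgroup.closure {σ | LegalMove G σ}

theorem mem_legalMoveGroup_of_list_prod_eq {w : List (Perm V)} {σ : Perm V}
    (hw : ∀ τ ∈ w, LegalMove G τ) (h : w.prod = σ) : σ ∈ legalMoveGroup G :=
  h ▸ Subgroup.list_prod_mem _ fun τ hτ => Subgroup.subset_closure (hw τ hτ)

theorem reflTransGen_step_trans_of_mem_legalMoveGroup {R : Type*} {σ : Perm V}
    (hσ : σ ∈ legalMoveGroup G) (c : R ≃ V) :
    Relation.ReflTransGen (Step G) c (c.trans σ) := by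
  induction hσ using Subgroup.closure_induction generalizing c with
  | mem τ hτ => exact .single ⟨τ, hτ, rfl⟩
  | one => exact .refl
  | mul τ ρ _ _ hτ hρ =>
    rw [Perm.mul_def, ← trans_assoc]
    exact (hρ c).trans (hτ _)
  | inv τ _ hτ =>
    have : Std.Symm (Step (R := R) G) := ⟨fun _ _ h => h.symm⟩
    simpa [trans_assoc, Perm.inv_def] using Std.Symm.symm _ _ (hτ (c.trans τ⁻¹))

end LegalMoves

section Transfer

variable {V W : Type*} [Fintype V] [DecidableEq W]
  {G : SimpleGraph V} {H : SimpleGraph W}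

theorem Equiv.Perm.viaFintypeEmbedding_swap [DecidableEq V] (f : V ↪ W) (u v : V) :
    (swap u v).viaFintypeEmbedding f = swap (f u) (f v) := by
  ext x
  by_cases hx : x ∈ Set.range f
  · obtain ⟨a, rfl⟩ := hx
    rw [Perm.viaFintypeEmbedding_apply_image, f.injective.swap_apply]
  · rw [Perm.viaFintypeEmbedding_apply_notMem_range _ _ hx, swap_apply_of_ne_of_ne]
    all_goals rintro rfl; exact hx ⟨_, rfl⟩

theorem LegalMove.viaFintypeEmbedding (f : G.Copy H) {σ : Perm V} (hσ : LegalMove G σ) :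
    LegalMove H (σ.viaFintypeEmbedding f.toEmbedding) := by
  refine ⟨fun w => ?_, fun w hw => ?_⟩
  all_goals by_cases hwf : w ∈ Set.range f.toEmbedding
  · obtain ⟨a, rfl⟩ := hwf
    rw [Perm.viaFintypeEmbedding_apply_image]
    exact (hσ.1 a).imp (congrArg f) (f.toHom.map_adj ·)
  · exact Or.inl (Perm.viaFintypeEmbedding_apply_notMem_range _ _ hwf)
  · obtain ⟨a, rfl⟩ := hwf
    simp only [Perm.viaFintypeEmbedding_apply_image, ne_eq, f.toEmbedding.injective.eq_iff]
      at hw ⊢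
    exact hσ.2 a hw
  · exact absurd (Perm.viaFintypeEmbedding_apply_notMem_range _ _ hwf) hw

theorem SimpleGraph.Copy.swap_mem_legalMoveGroup [DecidableEq V] (f : G.Copy H) {u v : V}
    (h : swap u v ∈ legalMoveGroup G) : swap (f u) (f v) ∈ legalMoveGroup H := by
  have hle : (legalMoveGroup G).map (Perm.extendDomainHom f.toEmbedding.toEquivRange) ≤
      legalMoveGroup H := by
    rw [legalMoveGroup, MonoidHom.map_closure, Subgroup.closure_le]
    rintro _ ⟨σ, hσ, rfl⟩
    exact Subgroup.subset_closure (LegalMove.viaFintypeEmbedding f hσ)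
  change swap (f.toEmbedding u) (f.toEmbedding v) ∈ _
  rw [← Perm.viaFintypeEmbedding_swap]
  exact hle ⟨_, h, rfl⟩

end Transfer

theorem SimpleGraph.Connected.closure_swap_adj_eq_top {V : Type*} [Finite V] [DecidableEq V]
    {G : SimpleGraph V} (hG : G.Connected) :
    Subgroup.closure {σ : Perm V | ∃ u v, G.Adj u v ∧ swap u v = σ} = ⊤ := by
  set S := {σ : Perm V | ∃ u v, G.Adj u v ∧ swap u v = σ}
  have : MulAction.IsPretransitive (Subgroup.closure S) V := by
    refine ⟨fun x y => ?_⟩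
    induction (reachable_iff_reflTransGen x y).1 (hG x y) with
    | refl => exact ⟨1, one_smul _ _⟩
    | tail _ hyz ih =>
      obtain ⟨g, rfl⟩ := ih
      refine ⟨⟨_, Subgroup.subset_closure ⟨_, _, hyz, rfl⟩⟩ * g, ?_⟩
      rw [mul_smul]
      exact swap_apply_left _ _
  exact closure_of_isSwap_of_isPretransitive fun _ ⟨u, v, h, hσ⟩ => ⟨u, v, h.ne, hσ.symm⟩

section GridGraph

variable {n : ℕ}

theorem gridGraph_adj {u v : Fin n × Fin n} :
    (gridGraph n).Adj u v ↔ Nat.dist u.1 v.1 + Nat.dist u.2 v.2 = 1 := by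
  rw [gridGraph, fromRel_adj, Nat.dist_comm v.1, Nat.dist_comm v.2, or_self,
    and_iff_right_of_imp]
  rintro h rfl
  simp at h

instance : DecidableRel (gridGraph n).Adj := fun _ _ => decidable_of_iff _ gridGraph_adj.symm

theorem gridGraph_eq_boxProd : gridGraph n = pathGraph n □ pathGraph n := by
  ext u v
  simp only [gridGraph_adj, boxProd_adj, pathGraph_adj, Nat.dist, Fin.ext_iff]
  omega

theorem gridGraph_connected (hn : 0 < n) : (gridGraph n).Connected := by
  obtain ⟨k, rfl⟩ := Nat.exists_eq_add_of_lt hn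
  exact gridGraph_eq_boxProd ▸ (pathGraph_connected _).boxProd (pathGraph_connected _)

def gridGraph.transpose : gridGraph n ≃g gridGraph n :=
  ⟨Equiv.prodComm _ _, by simp [gridGraph_adj, add_comm]⟩

def gridGraph.translate {m : ℕ} (i j : ℕ) (hi : i + m ≤ n) (hj : j + m ≤ n) :
    (gridGraph m).Copy (gridGraph n) where
  toHom := ⟨fun p => (⟨i + p.1, by omega⟩, ⟨j + p.2, by omega⟩), fun h => by
    rw [gridGraph_adj, Nat.dist, Nat.dist] at h ⊢
    dsimp only
    omega⟩
  injective' _ _ h := by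
    simp only [RelHom.coeFn_mk, Prod.mk.injEq, Fin.mk.injEq, add_right_inj] at h
    exact Prod.ext (Fin.ext h.1) (Fin.ext h.2)

@[simp]
theorem gridGraph.translate_apply {m : ℕ} (i j : ℕ) (hi : i + m ≤ n) (hj : j + m ≤ n)
    (p : Fin m × Fin m) :
    gridGraph.translate i j hi hj p = (⟨i + p.1, by omega⟩, ⟨j + p.2, by omega⟩) :=
  rfl

end GridGraph

section SquareRotations

def squareRot (i j : Fin 2) : Perm (Fin 3 × Fin 3) :=
  [(i.castSucc, j.castSucc), (i.castSucc, j.succ), (i.succ, j.succ),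
    (i.succ, j.castSucc)].formPerm

local notation "ρ" => squareRot

theorem legalMove_squareRot : ∀ i j, LegalMove (gridGraph 3) (ρ i j) := by
  decide

theorem swap_mem_legalMoveGroup_three (a : Fin 3) (b : Fin 2) :
    swap (a, b.castSucc) (a, b.succ) ∈ legalMoveGroup (gridGraph 3) := by
  have hρ i j : LegalMove (gridGraph 3) (ρ i j) ∧ LegalMove (gridGraph 3) (ρ i j)⁻¹ :=
    ⟨legalMove_squareRot i j, (legalMove_squareRot i j).inv⟩
  fin_cases a <;> fin_cases b
  · exact mem_legalMoveGroup_of_list_prod_eq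
      (w := [(ρ 1 0)⁻¹, ρ 0 1, ρ 1 0, (ρ 0 1)⁻¹, (ρ 0 0)⁻¹])
      (by simp [hρ]) (by decide)
  · exact mem_legalMoveGroup_of_list_prod_eq
      (w := [(ρ 1 1)⁻¹, (ρ 0 1)⁻¹, (ρ 0 0)⁻¹, ρ 1 1, ρ 0 0])
      (by simp [hρ]) (by decide)
  · exact mem_legalMoveGroup_of_list_prod_eq
      (w := [(ρ 0 0)⁻¹, ρ 0 1, (ρ 1 0)⁻¹, (ρ 0 1)⁻¹, ρ 1 0, ρ 0 0, ρ 0 0])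
      (by simp [hρ]) (by decide)
  · exact mem_legalMoveGroup_of_list_prod_eq
      (w := [(ρ 1 1)⁻¹, (ρ 1 0)⁻¹, (ρ 1 1)⁻¹, ρ 1 0, ρ 0 0, ρ 1 1, (ρ 0 0)⁻¹])
      (by simp [hρ]) (by decide)
  · exact mem_legalMoveGroup_of_list_prod_eq
      (w := [(ρ 1 1)⁻¹, (ρ 0 0)⁻¹, ρ 1 1, ρ 1 0, ρ 0 0])
      (by simp [hρ]) (by decide)
  · exact mem_legalMoveGroup_of_list_prod_eq
      (w := [ρ 1 1, ρ 1 0, (ρ 0 1)⁻¹, (ρ 1 0)⁻¹, ρ 0 1])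
      (by simp [hρ]) (by decide)

end SquareRotations

section EdgeSwaps

variable {n : ℕ}

theorem swap_mem_legalMoveGroup_gridGraph_of_horizontal (hn : 3 ≤ n) (i : Fin n) {j k : Fin n}
    (hjk : j.val + 1 = k) : swap (i, j) (i, k) ∈ legalMoveGroup (gridGraph n) := by
  set i₀ := min (i : ℕ) (n - 3)
  set j₀ := min (j : ℕ) (n - 3)
  have hi₀ : i₀ + 3 ≤ n := by omega
  have hj₀ : j₀ + 3 ≤ n := by omega
  convert (gridGraph.translate i₀ j₀ hi₀ hj₀).swap_mem_legalMoveGroup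
    (swap_mem_legalMoveGroup_three ⟨i - i₀, by omega⟩ ⟨j - j₀, by omega⟩) using 2 <;>
  · ext <;> simp only [gridGraph.translate_apply, Fin.val_castSucc, Fin.val_succ] <;> omega

theorem swap_mem_legalMoveGroup_gridGraph_of_vertical (hn : 3 ≤ n) (i : Fin n) {j k : Fin n}
    (hjk : j.val + 1 = k) : swap (j, i) (k, i) ∈ legalMoveGroup (gridGraph n) :=
  gridGraph.transpose.toCopy.swap_mem_legalMoveGroup
    (swap_mem_legalMoveGroup_gridGraph_of_horizontal hn i hjk)

theorem swap_mem_legalMoveGroup_gridGraph (hn : 3 ≤ n) {u v : Fin n × Fin n}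
    (h : (gridGraph n).Adj u v) : swap u v ∈ legalMoveGroup (gridGraph n) := by
  obtain ⟨a, b⟩ := u
  obtain ⟨c, d⟩ := v
  simp only [gridGraph_adj, Nat.dist] at h
  obtain ⟨rfl, hbd | hdb⟩ | ⟨rfl, hac | hca⟩ :
      (a = c ∧ (b.val + 1 = d ∨ d.val + 1 = b)) ∨
        (b = d ∧ (a.val + 1 = c ∨ c.val + 1 = a)) := by
    simp only [Fin.ext_iff]
    omega
  · exact swap_mem_legalMoveGroup_gridGraph_of_horizontal hn a hbd
  · rw [swap_comm]
    exact swap_mem_legalMoveGroup_gridGraph_of_horizontal hn a hdb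
  · exact swap_mem_legalMoveGroup_gridGraph_of_vertical hn b hac
  · rw [swap_comm]
    exact swap_mem_legalMoveGroup_gridGraph_of_vertical hn b hca

theorem legalMoveGroup_gridGraph_eq_top (hn : 3 ≤ n) : legalMoveGroup (gridGraph n) = ⊤ := by
  rw [eq_top_iff, ← (gridGraph_connected (by omega)).closure_swap_adj_eq_top,
    Subgroup.closure_le]
  rintro _ ⟨u, v, h, rfl⟩
  exact swap_mem_legalMoveGroup_gridGraph hn h

end EdgeSwaps

/-- For every `n ≥ 3`, all configurations of the `n²`-puzzle are connected via legal moves: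
any bijection of the `n²` labeled robots onto the vertices of the `n × n` grid graph can be
transformed to any other by a sequence of synchronous rotations along vertex-disjoint
cycles. -/
theorem stmt5 (n : ℕ) (hn : 3 ≤ n) (c c' : Fin (n ^ 2) ≃ Fin n × Fin n) :
    Relation.ReflTransGen (Step (gridGraph n)) c c' := by
  have hσ : c.symm.trans c' ∈ legalMoveGroup (gridGraph n) := by
    simp [legalMoveGroup_gridGraph_eq_top hn]
  simpa [← trans_assoc] using reflTransGen_step_trans_of_mem_legalMoveGroup hσ c
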